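/- arXiv:2503.07132 — 5 statements merged into one kernel-verified Lean document; each statement's English description precedes it below -/
import Mathlib

section
/- For all non-negative integers n, q, t, s, p with n ≥ s, q ≥ 1, and p < n - s, the ball B_{t,s,p}(0^n) equals the set of all sequences y ∈ A_q^{n+t-s} whose number of nonzero entries is at most t + p. -/
/-- The subsequence of `x` indexed by the finite set `S` of size `m`,
entries taken in increasing index order. -/
def subseqOf {q n m : ℕ} (x : Fin n → Fin q) (S : Finset (Fin n)) (h : S.card = m) :
    Fin m → Fin q :=
  fun i => x ((S.orderIsoOfFin h i : Fin n))

/-- The insertion/deletion/substitution ball of `x ∈ A_q^n`: all sequences `z` of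
length `m` such that some subsequence of `x` of length `n - s` is within Hamming
distance `p` of some subsequence of `z` of the same length.  For the `t`-insertion
`s`-deletion `p`-substitution ball `B_{t,s,p}(x)`, take `m = n + t - s`. -/
def idsBall (q s p : ℕ) {n m : ℕ} (x : Fin n → Fin q) : Set (Fin m → Fin q) :=
  { z | ∃ (S1 : Finset (Fin n)) (S2 : Finset (Fin m))
      (h1 : S1.card = n - s) (h2 : S2.card = n - s),
      hammingDist (subseqOf x S1 h1) (subseqOf z S2 h2) ≤ p }

/-!
A subsequence of the constant sequence `c` is again constant, so its Hamming distance to a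
subsequence `z_S` of `z` counts the positions of `S` where `z` differs from `c`. Such a set `S`
of size `k` misses at most `m - k` of the positions where `z ≠ c`, and choosing `S` to contain as
many positions with `z = c` as possible attains this. Hence `z` lies in the ball of `c^n` iff
`n - s ≤ m` and `#{i | z i ≠ c} ≤ (m - (n - s)) + p`. For `m = n + t - s` this is the bound
`t + p` (when `s > n` the truncated subtractions make both conditions hold for every `z`).
-/

open Finset

@[simp]
lemma subseqOf_const {q n k : ℕ} (c : Fin q) (S : Finset (Fin n)) (h : #S = k) :
    subseqOf (fun _ => c) S h = fun _ => c :=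
  rfl

lemma hammingDist_const_subseqOf {q m k : ℕ} (c : Fin q) (z : Fin m → Fin q)
    (S : Finset (Fin m)) (h : #S = k) :
    hammingDist (fun _ : Fin k => c) (subseqOf z S h) = #{j ∈ S | z j ≠ c} := by
  conv_rhs => rw [← S.map_orderEmbOfFin_univ h, filter_map, card_map]
  simp only [hammingDist, subseqOf, coe_orderIsoOfFin_apply, ne_comm]
  rfl

lemma card_filter_le_card_filter_add_card_compl {α : Type*} [Fintype α] [DecidableEq α]
    (P : α → Prop) [DecidablePred P] (S : Finset α) :
    #{a | P a} ≤ #{a ∈ S | P a} + (Fintype.card α - #S) := by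
  calc #{a | P a} ≤ #({a ∈ S | P a} ∪ Sᶜ) := card_le_card fun a ha => by
          by_cases haS : a ∈ S <;> simp_all
    _ ≤ #{a ∈ S | P a} + #Sᶜ := card_union_le _ _
    _ = #{a ∈ S | P a} + (Fintype.card α - #S) := by rw [card_compl]

lemma exists_card_eq_card_filter_eq {α : Type*} [Fintype α] [DecidableEq α]
    (P : α → Prop) [DecidablePred P] {k : ℕ} (hk : k ≤ Fintype.card α) :
    ∃ S : Finset α, #S = k ∧ #{a ∈ S | P a} = k - #{a | ¬P a} := by
  rcases le_total k #{a | ¬P a} with hkQ | hQk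
  · obtain ⟨S, hSQ, hS⟩ := exists_subset_card_eq hkQ
    refine ⟨S, hS, ?_⟩
    rw [filter_false_of_mem fun a ha => (mem_filter.mp (hSQ ha)).2, card_empty]
    omega
  · obtain ⟨S, hQS, hS⟩ := exists_superset_card_eq hQk hk
    refine ⟨S, hS, ?_⟩
    rw [← hS, ← card_sdiff_of_subset hQS]
    congr 1
    ext a
    by_cases a ∈ S <;> by_cases P a <;> simp_all

theorem mem_idsBall_const_iff {q s p n m : ℕ} (c : Fin q) (z : Fin m → Fin q) :
    z ∈ idsBall q s p (fun _ : Fin n => c) ↔ n - s ≤ m ∧ #{i | z i ≠ c} ≤ m - (n - s) + p := by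
  constructor
  · rintro ⟨S1, S2, h1, h2, hd⟩
    have hk := card_le_univ S2
    have hz := card_filter_le_card_filter_add_card_compl (z · ≠ c) S2
    rw [subseqOf_const, hammingDist_const_subseqOf] at hd
    simp only [Fintype.card_fin, h2] at hk hz
    omega
  · rintro ⟨hk, hz⟩
    obtain ⟨S1, -, h1⟩ := exists_subset_card_eq (show n - s ≤ #(univ : Finset (Fin n)) by simp)
    obtain ⟨S2, h2, hS2⟩ :=
      exists_card_eq_card_filter_eq (z · ≠ c) (hk.trans_eq (Fintype.card_fin m).symm)
    have hsplit := card_filter_add_card_filter_not (s := univ) (z · ≠ c)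
    simp only [card_univ, Fintype.card_fin] at hsplit
    refine ⟨S1, S2, h1, h2, ?_⟩
    rw [subseqOf_const, hammingDist_const_subseqOf, hS2]
    omega

theorem idsBall_zero_eq_general (n q t s p : ℕ) (hq : 1 ≤ q) :
    (idsBall q s p (fun _ : Fin n => (⟨0, hq⟩ : Fin q)) :
        Set (Fin (n + t - s) → Fin q)) =
      { y | (Finset.univ.filter (fun i => y i ≠ (⟨0, hq⟩ : Fin q))).card ≤ t + p } := by
  ext z
  have hle : #{i | z i ≠ ⟨0, hq⟩} ≤ n + t - s := (card_filter_le _ _).trans_eq (card_fin _)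
  rw [mem_idsBall_const_iff, Set.mem_ofPred_eq]
  omega

/-- for `p < n - s`, the ball of the all-zero sequence consists of
the sequences of length `n + t - s` with at most `t + p` nonzero entries. -/
theorem idsBall_zero_eq (n q t s p : ℕ) (hsn : s ≤ n) (hq : 1 ≤ q) (hp : p < n - s) :
    (idsBall q s p (fun _ : Fin n => (⟨0, hq⟩ : Fin q)) :
        Set (Fin (n + t - s) → Fin q)) =
      { y | (Finset.univ.filter (fun i => y i ≠ (⟨0, hq⟩ : Fin q))).card ≤ t + p } :=
  idsBall_zero_eq_general n q t s p hq
end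

section
/- For all non-negative integers n, q, t, p with q ≥ 1, t ≥ 1, t + p < n, and every sequence x ∈ A_q^n with more than one run, there exists z ∈ B_{t,t,p}(x) whose Hamming distance from x equals t + p + 1; in particular B_{0,0,t+p}(x) is a proper subset of B_{t,t,p}(x). -/
/-! Pick a run boundary `x_i ≠ x_{i+1}` and let `z` be `x` with these two entries swapped and
`t - 1 + p` further entries changed, so `d_H(x, z) = t + p + 1`. Deleting position `i` of `x` and
position `i + 1` of `z` aligns the swapped pair; the other `t - 1` deletions remove changed
entries, and the `p` changed entries left over are the substitutions. -/

open Finset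

theorem mem_idsBall_of_strictMonoOn {q s p n m : ℕ} {x : Fin n → Fin q} {z : Fin m → Fin q}
    {S : Finset (Fin n)} (hS : #S = n - s) {f : Fin n → Fin m} (hf : StrictMonoOn f S)
    (hp : #{j ∈ S | x j ≠ z (f j)} ≤ p) : z ∈ idsBall q s p x := by
  have hS' : #(S.image f) = n - s := by rw [card_image_of_injOn hf.injOn, hS]
  have himage : ∀ k, (S.image f).orderEmbOfFin hS' k = f (S.orderEmbOfFin hS k) := by
    refine congrFun (orderEmbOfFin_unique hS' (fun k => mem_image_of_mem f
      (orderEmbOfFin_mem S hS k)) fun a b hab => ?_).symm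
    exact hf (orderEmbOfFin_mem S hS a) (orderEmbOfFin_mem S hS b)
      ((S.orderEmbOfFin hS).strictMono hab)
  refine ⟨S, S.image f, hS, hS', le_trans ?_ hp⟩
  refine card_le_card_of_injOn (S.orderEmbOfFin hS) (fun k hk => ?_)
    (S.orderEmbOfFin hS).injective.injOn
  rw [coe_filter]
  exact ⟨orderEmbOfFin_mem S hS k, by simpa [subseqOf, himage] using hk⟩

theorem mem_idsBall_of_hammingDist_le {q s p n : ℕ} {x z : Fin n → Fin q} (hs : s ≤ n)
    (hxz : hammingDist x z ≤ s + p) : z ∈ idsBall q s p x := by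
  -- delete `min s d_H(x, z)` of the differing positions
  set Δ : Finset (Fin n) := {j | x j ≠ z j}
  obtain ⟨E, hEΔ, hE⟩ : ∃ E ⊆ Δ, #E = min s #Δ := exists_subset_card_eq (min_le_right _ _)
  obtain ⟨D, hED, -, hD⟩ : ∃ D, E ⊆ D ∧ D ⊆ univ ∧ #D = s :=
    exists_subsuperset_card_eq (subset_univ E) (by omega) (by simpa using hs)
  refine mem_idsBall_of_strictMonoOn (S := Dᶜ) (by simp [card_compl, hD]) strictMonoOn_id ?_
  calc #{j ∈ Dᶜ | x j ≠ z (id j)} ≤ #(Δ \ E) :=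
        card_le_card fun j hj => by
          simp only [mem_filter, mem_compl, id] at hj
          exact mem_sdiff.2 ⟨by simpa [Δ] using hj.2, fun h => hj.1 (hED h)⟩
    _ ≤ p := by
        have : #Δ = hammingDist x z := rfl
        rw [card_sdiff_of_subset hEΔ, hE]; omega

theorem Fin.exists_castSucc_ne_succ {α : Type*} {m : ℕ} {x : Fin (m + 1) → α}
    {a b : Fin (m + 1)} (hab : x a ≠ x b) : ∃ i : Fin m, x i.castSucc ≠ x i.succ := by
  by_contra! h
  have hconst : ∀ k, x k = x 0 := fun k => by
    induction k using Fin.induction with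
    | zero => rfl
    | succ i ih => rw [← h i, ih]
  exact hab (by rw [hconst a, hconst b])

theorem strictMonoOn_swap_castSucc_succ {m : ℕ} (i : Fin m) :
    StrictMonoOn (Equiv.swap i.castSucc i.succ) ({i.castSucc}ᶜ : Finset (Fin (m + 1))) := by
  intro a ha b hb hab
  simp only [coe_compl, coe_singleton, Set.mem_compl_iff, Set.mem_singleton_iff] at ha hb
  simp only [Equiv.swap_apply_def]
  split_ifs <;> simp only [Fin.ext_iff, Fin.lt_def, Fin.val_castSucc, Fin.val_succ] at * <;> omega

theorem hammingDist_piecewise_swap {q n : ℕ} (x v : Fin n → Fin q) {C : Finset (Fin n)}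
    {i i' : Fin n} (hxi : x i ≠ x i') (hi : i ∉ C) (hi' : i' ∉ C)
    (hv : ∀ j ∈ C, v j ≠ x j) :
    hammingDist x (C.piecewise v (x ∘ Equiv.swap i i')) = #C + 2 := by
  have hii' : i ≠ i' := fun h => hxi (congrArg x h)
  have hdiff : ({j | x j ≠ C.piecewise v (x ∘ Equiv.swap i i') j} : Finset (Fin n)) =
      insert i (insert i' C) := by
    ext j
    by_cases hj : j ∈ C
    · simp [hj, (hv j hj).symm]
    · rcases eq_or_ne j i with rfl | hji
      · simp [hj, hxi]
      rcases eq_or_ne j i' with rfl | hji'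
      · simp [hj, Ne.symm hxi]
      · simp [hj, hji, hji', Equiv.swap_apply_of_ne_of_ne hji hji']
  rw [hammingDist, hdiff, card_insert_of_notMem (by simp [hii', hi]), card_insert_of_notMem hi']

theorem piecewise_swap_mem_idsBall {q m p : ℕ} (x v : Fin (m + 1) → Fin q) (i : Fin m)
    {C D : Finset (Fin (m + 1))} (hi : i.castSucc ∉ C) (hDC : D ⊆ C)
    (hp : #(C \ D) ≤ p) :
    C.piecewise v (x ∘ Equiv.swap i.castSucc i.succ) ∈ idsBall q (#D + 1) p x := by
  set σ := Equiv.swap i.castSucc i.succ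
  refine mem_idsBall_of_strictMonoOn (S := (insert i.castSucc D)ᶜ) ?_
    ((strictMonoOn_swap_castSucc_succ i).mono ?_) (le_trans (card_le_card fun j hj => ?_) hp)
  · rw [card_compl, card_insert_of_notMem (fun h => hi (hDC h)), Fintype.card_fin]
  · simp
  · simp only [mem_filter, mem_compl, mem_insert, not_or] at hj
    obtain ⟨⟨hji, hjD⟩, hne⟩ := hj
    by_cases hσj : σ j ∈ C
    · have hji' : j ≠ i.succ := by rintro rfl; exact hi (by simpa [σ] using hσj)
      rw [Equiv.swap_apply_of_ne_of_ne hji hji'] at hσj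
      exact mem_sdiff.2 ⟨hσj, hjD⟩
    · simp [piecewise_eq_of_notMem _ _ _ hσj, σ] at hne

theorem exists_far_elem_idsBall_general (n q t p : ℕ) (ht : 1 ≤ t)
    (htp : t + p < n) (x : Fin n → Fin q) (hx : ∃ i j, x i ≠ x j) :
    (∃ z ∈ (idsBall q t p x : Set (Fin n → Fin q)),
        hammingDist x z = t + p + 1) ∧
      { z : Fin n → Fin q | hammingDist x z ≤ t + p } ⊂
        (idsBall q t p x : Set (Fin n → Fin q)) := by
  cases n with
  | zero => omega
  | succ m =>
  obtain ⟨a, b, hab⟩ := hx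
  obtain ⟨i, hi⟩ := Fin.exists_castSucc_ne_succ hab
  have : Nontrivial (Fin q) := ⟨⟨_, _, hi⟩⟩
  choose other hother using fun c : Fin q => exists_ne c
  obtain ⟨C, hC, hCcard⟩ : ∃ C ⊆ {i.castSucc, i.succ}ᶜ, #C = t - 1 + p :=
    exists_subset_card_eq (by
      rw [card_compl, card_pair Fin.castSucc_lt_succ.ne, Fintype.card_fin]; omega)
  obtain ⟨D, hDC, hDcard⟩ : ∃ D ⊆ C, #D = t - 1 := exists_subset_card_eq (by omega)
  have hiC : i.castSucc ∉ C := fun h => by simpa using hC h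
  have hi'C : i.succ ∉ C := fun h => by simpa using hC h
  set z := C.piecewise (other ∘ x) (x ∘ Equiv.swap i.castSucc i.succ)
  have hz : z ∈ idsBall q t p x := by
    have := piecewise_swap_mem_idsBall (p := p) x (other ∘ x) i hiC hDC
      (by rw [card_sdiff_of_subset hDC]; omega)
    rwa [hDcard, Nat.sub_add_cancel ht] at this
  have hdist : hammingDist x z = t + p + 1 := by
    rw [hammingDist_piecewise_swap x (other ∘ x) hi hiC hi'C fun j _ => hother (x j)]
    omega
  refine ⟨⟨z, hz, hdist⟩, (Set.ssubset_iff_of_subset fun w hw =>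
    mem_idsBall_of_hammingDist_le (by omega) hw).2
      ⟨z, hz, fun h : hammingDist x z ≤ t + p => by omega⟩⟩

/-- there is an element of `B_{t,t,p}(x)` at Hamming distance
exactly `t + p + 1` from `x`; in particular the Hamming ball of radius
`t + p` is a proper subset of `B_{t,t,p}(x)`. -/
theorem exists_far_elem_idsBall (n q t p : ℕ) (hq : 1 ≤ q) (ht : 1 ≤ t)
    (htp : t + p < n) (x : Fin n → Fin q) (hx : ∃ i j, x i ≠ x j) :
    (∃ z ∈ (idsBall q t p x : Set (Fin n → Fin q)),
        hammingDist x z = t + p + 1) ∧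
      { z : Fin n → Fin q | hammingDist x z ≤ t + p } ⊂
        (idsBall q t p x : Set (Fin n → Fin q)) :=
  exists_far_elem_idsBall_general n q t p ht htp x hx
end

section
/- For all integers q ≥ 2, p ≥ 0, and m ≥ p + 1, the strict inequality q · Σ_{i=0}^{p-1} C(m-1, i) (q-1)^i < Σ_{i=0}^{p} C(m, i) (q-1)^i holds. -/
/-! Pascal's rule splits the truncated sum `∑_{i ≤ p} C(m+1, i) r^i` as
`(r + 1) ∑_{i < p} C(m, i) r^i + C(m, p) r^p`. With `r = q - 1` the first summand is exactly
`q` times the left-hand side, and the remainder `C(m, p) (q - 1)^p` is positive as soon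
as `p ≤ m` and `q ≥ 2`. -/

theorem sum_range_succ_choose_succ_mul_pow {R : Type*} [CommSemiring R] (r : R) (m p : ℕ) :
    ∑ i ∈ Finset.range (p + 1), ((m + 1).choose i : R) * r ^ i =
      (r + 1) * ∑ i ∈ Finset.range p, (m.choose i : R) * r ^ i + m.choose p * r ^ p := by
  induction p with
  | zero => simp
  | succ p ih =>
    rw [Finset.sum_range_succ, ih, Finset.sum_range_succ, Nat.choose_succ_succ, Nat.cast_add]
    ring

/-- a binomial inequality. -/
theorem binom_sum_lt (q p m : ℕ) (hq : 2 ≤ q) (hm : p + 1 ≤ m) :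
    q * ∑ i ∈ Finset.range p, (m - 1).choose i * (q - 1) ^ i <
      ∑ i ∈ Finset.range (p + 1), m.choose i * (q - 1) ^ i := by
  obtain ⟨n, rfl⟩ : ∃ n, m = n + 1 := ⟨m - 1, by omega⟩
  have hsplit := sum_range_succ_choose_succ_mul_pow (q - 1) n p
  simp only [Nat.cast_id, Nat.sub_add_cancel (by omega : 1 ≤ q)] at hsplit
  have hrem : 0 < n.choose p * (q - 1) ^ p :=
    Nat.mul_pos (Nat.choose_pos (by omega)) (pow_pos (by omega) p)
  rw [hsplit, Nat.add_sub_cancel]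
  omega
end

section
/- For all non-negative integers n, q, t, p with q ≥ 1, t ≥ 1, p ≥ 1, p < n, and every sequence x ∈ A_q^n with more than one run, the strict inequality |B_{t,0,p}(x)| > Σ_{i=0}^{t+p} C(n+t, i) (q-1)^i holds; in particular, the size of the t-insertion p-substitution ball is not uniform over A_q^n in this regime. -/
/-!
Write `B_p(x, m)` for the words `z` of length `m` into which `x` embeds as a subsequence with
at most `p` substitutions; it lies inside `idsBall q 0 p x`. Sorting `B_p(a :: x', m + 1)` by the
first letter of `z` gives
`|B_p(a :: x', m + 1)| ≥ |B_p(x', m)| + (q - 1) · max (|B_p(a :: x', m)|, |B_{p-1}(x', m)|)`,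
which matches Pascal's rule `V(m + 1, r + 1) = V(m, r + 1) + (q - 1) V(m, r)` for the
Hamming-ball volume `V(m, r) = ∑_{i ≤ r} C(m, i) (q - 1)^i`; by induction
`|B_p(x, n + t)| ≥ V(n + t, t + p)`.

For strictness, induct on `n`. If `p = n - 1`, every `z` agreeing somewhere with the clipped
copy `s ↦ x_{min(s, n-1)}` of `x` lies in `B_p`, and so does one `z` agreeing nowhere with it,
built from an adjacent pair `x_k ≠ x_{k+1}`; counting the complement gives the extra word.
If `p < n - 1`, a strict bound for a non-constant tail survives the recursion, and as `B_p` is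
invariant under reversing both words, `x` or its reverse has a non-constant tail.
-/

theorem Fin.exists_castSucc_ne_succ_s14 {α : Type*} {n : ℕ} {x : Fin (n + 1) → α}
    (hx : ∃ i j, x i ≠ x j) : ∃ k : Fin n, x k.castSucc ≠ x k.succ := by
  by_contra! h
  have hconst : ∀ i, x i = x 0 := fun i => by
    induction i using Fin.induction with
    | zero => rfl
    | succ k ih => rw [← h k, ih]
  obtain ⟨i, j, hij⟩ := hx
  exact hij (by rw [hconst i, hconst j])

theorem Fin.tail_nonconstant_or_tail_rev_nonconstant {α : Type*} {n : ℕ}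
    {x : Fin (n + 1) → α} (hn : 2 ≤ n) (hx : ∃ i j, x i ≠ x j) :
    (∃ i j, Fin.tail x i ≠ Fin.tail x j) ∨
      ∃ i j, Fin.tail (x ∘ Fin.rev) i ≠ Fin.tail (x ∘ Fin.rev) j := by
  obtain ⟨k, hk⟩ := Fin.exists_castSucc_ne_succ_s14 hx
  rcases Nat.eq_zero_or_pos k with hk0 | hk0
  · refine Or.inr ⟨⟨n - 1, by omega⟩, ⟨n - 2, by omega⟩, ?_⟩
    convert hk using 1 <;> refine congrArg x (Fin.ext ?_) <;> simp [Fin.val_rev] <;> omega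
  · refine Or.inl ⟨⟨k - 1, by omega⟩, ⟨k, k.isLt⟩, ?_⟩
    convert hk using 1 <;> refine congrArg x (Fin.ext ?_)
    · simp
      omega
    · simp

open Finset

theorem hammingDist_comp_equiv {α ι ι' : Type*} [Fintype ι] [Fintype ι'] [DecidableEq α]
    (e : ι ≃ ι') (x y : ι' → α) : hammingDist (x ∘ e) (y ∘ e) = hammingDist x y := by
  unfold hammingDist
  rw [← map_univ_equiv e, filter_map, card_map]
  rfl

theorem hammingDist_cons_cons {α : Type*} [DecidableEq α] {n : ℕ} (a b : α)
    (x y : Fin n → α) :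
    hammingDist (Fin.cons a x : Fin (n + 1) → α) (Fin.cons b y) =
      hammingDist x y + if a = b then 0 else 1 := by
  unfold hammingDist
  rw [card_filter, card_filter, Fin.sum_univ_succ]
  simp only [Fin.cons_zero, Fin.cons_succ, ite_not]
  omega

def hammingBallVol (q m r : ℕ) : ℕ :=
  ∑ i ∈ range (r + 1), m.choose i * (q - 1) ^ i

theorem hammingBallVol_zero_right (q m : ℕ) : hammingBallVol q m 0 = 1 := by
  simp [hammingBallVol]

theorem hammingBallVol_succ_succ (q m r : ℕ) :
    hammingBallVol q (m + 1) (r + 1) =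
      hammingBallVol q m (r + 1) + (q - 1) * hammingBallVol q m r := by
  unfold hammingBallVol
  rw [sum_range_succ' (fun i => (m + 1).choose i * (q - 1) ^ i),
    sum_range_succ' (fun i => m.choose i * (q - 1) ^ i)]
  simp only [Nat.choose_succ_succ, Nat.succ_eq_add_one, Nat.choose_zero_right, pow_zero,
    mul_one, add_mul, sum_add_distrib, mul_sum, pow_succ]
  have h : ∀ i, (q - 1) * (m.choose i * (q - 1) ^ i) = m.choose i * ((q - 1) ^ i * (q - 1)) :=
    fun i => by ring
  simp only [h]
  omega

theorem hammingBallVol_of_le {q m r : ℕ} (hq : 1 ≤ q) (h : m ≤ r) :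
    hammingBallVol q m r = q ^ m := by
  unfold hammingBallVol
  rw [← sum_subset (range_subset_range.2 (by omega : m + 1 ≤ r + 1)), ← Nat.sub_add_cancel hq,
    add_pow, Nat.sub_add_cancel hq]
  · exact sum_congr rfl fun i _ => by simp [mul_comm]
  · intro i _ hi
    rw [mem_range, not_lt] at hi
    rw [Nat.choose_eq_zero_of_lt (by omega), zero_mul]

theorem hammingBallVol_add_pow {q : ℕ} (hq : 1 ≤ q) (m : ℕ) :
    hammingBallVol q (m + 1) m + (q - 1) ^ (m + 1) = q ^ (m + 1) := by
  rw [← hammingBallVol_of_le hq (le_refl (m + 1)), hammingBallVol, hammingBallVol,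
    sum_range_succ (fun i => (m + 1).choose i * (q - 1) ^ i) (m + 1), Nat.choose_self, one_mul]

theorem subseqOf_eq_comp {q n k : ℕ} (x : Fin n → Fin q) {S : Finset (Fin n)} (h : #S = k)
    (f : Fin k ↪o Fin n) (hf : ∀ i, f i ∈ S) : subseqOf x S h = x ∘ f := by
  ext i
  simp [subseqOf, Finset.coe_orderIsoOfFin_apply, ← Finset.orderEmbOfFin_unique' h hf]

namespace InsertionBall

variable {α : Type*} {n m p : ℕ}

section Embedding

variable [DecidableEq α]

def EmbedsWithin (p : ℕ) (x : Fin n → α) (z : Fin m → α) : Prop :=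
  ∃ f : Fin n → Fin m, StrictMono f ∧ hammingDist x (z ∘ f) ≤ p

variable {x : Fin n → α} {z : Fin m → α}

theorem EmbedsWithin.cons (h : EmbedsWithin p x z) (a b : α) :
    EmbedsWithin (p + if a = b then 0 else 1) (Fin.cons a x : Fin (n + 1) → α)
      (Fin.cons b z : Fin (m + 1) → α) := by
  obtain ⟨f, hf, hd⟩ := h
  refine ⟨Fin.cons 0 (Fin.succ ∘ f),
    Fin.strictMono_cons.2 ⟨fun _ => Fin.succ_pos _, Fin.strictMono_succ.comp hf⟩, ?_⟩
  have hcomp : (Fin.cons b z : Fin (m + 1) → α) ∘ Fin.cons 0 (Fin.succ ∘ f) =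
      Fin.cons b (z ∘ f) := by
    ext j
    cases j using Fin.cases <;> simp
  rw [hcomp, hammingDist_cons_cons]
  omega

theorem EmbedsWithin.skip (h : EmbedsWithin p x z) (b : α) :
    EmbedsWithin p x (Fin.cons b z : Fin (m + 1) → α) := by
  obtain ⟨f, hf, hd⟩ := h
  exact ⟨Fin.succ ∘ f, Fin.strictMono_succ.comp hf, by simpa [Function.comp_def] using hd⟩

theorem EmbedsWithin.rev (h : EmbedsWithin p x z) :
    EmbedsWithin p (x ∘ Fin.rev) (z ∘ Fin.rev) := by
  obtain ⟨f, hf, hd⟩ := h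
  refine ⟨Fin.rev ∘ f ∘ Fin.rev,
    Fin.rev_strictAnti.comp (hf.comp_strictAnti Fin.rev_strictAnti), ?_⟩
  have hcomp : (z ∘ Fin.rev) ∘ Fin.rev ∘ f ∘ Fin.rev = (z ∘ f) ∘ Fin.revPerm := by
    ext j
    simp
  rwa [hcomp, show x ∘ Fin.rev = x ∘ Fin.revPerm from rfl, hammingDist_comp_equiv]

theorem embedsWithin_of_apply_eq {i : Fin n} {s : Fin m} (his : (i : ℕ) ≤ s)
    (hsm : (s : ℕ) + n ≤ m + i) (h : x i = z s) : EmbedsWithin (n - 1) x z := by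
  let f : Fin n → Fin m := fun j => ⟨if j < i then j else j + (s - i), by split_ifs <;> omega⟩
  refine ⟨f, fun j₁ j₂ hj => ?_, ?_⟩
  · rw [Fin.lt_def] at hj ⊢
    dsimp only [f]
    split_ifs <;> omega
  · have hfi : f i = s := Fin.ext (by simp [f]; omega)
    calc hammingDist x (z ∘ f) ≤ #(univ.erase i) :=
          card_le_card fun j hj => mem_erase.2 ⟨by rintro rfl; simp [hfi, h] at hj, mem_univ _⟩
      _ = n - 1 := by simp

end Embedding

variable [Fintype α] [DecidableEq α]

open scoped Classical in
noncomputable def ball (p : ℕ) (x : Fin n → α) (m : ℕ) : Finset (Fin m → α) :=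
  {z | EmbedsWithin p x z}

variable {x : Fin n → α} {z : Fin m → α}

theorem mem_ball : z ∈ ball p x m ↔ EmbedsWithin p x z := by
  simp [ball]

theorem ball_subset_idsBall {q n : ℕ} (p : ℕ) (x : Fin n → Fin q) (m : ℕ) :
    (ball p x m : Set (Fin m → Fin q)) ⊆ idsBall q 0 p x := by
  intro z hz
  obtain ⟨f, hf, hd⟩ := mem_ball.1 hz
  let e := OrderEmbedding.ofStrictMono f hf
  refine ⟨univ, univ.map e.toEmbedding, by simp, by simp, ?_⟩
  rwa [subseqOf_eq_comp x _ (RelEmbedding.refl (· ≤ ·)) (fun _ => mem_univ _),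
    subseqOf_eq_comp z _ e (fun _ => mem_map_of_mem _ (mem_univ _))]

theorem card_add_mul_le_of_cons_mem {S : Finset (Fin (m + 1) → α)} (a : α)
    {A C : Finset (Fin m → α)} (hA : ∀ z ∈ A, Fin.cons a z ∈ S)
    (hC : ∀ b ≠ a, ∀ z ∈ C, Fin.cons b z ∈ S) :
    #A + (Fintype.card α - 1) * #C ≤ #S := by
  set T := ({a} ×ˢ A) ∪ ((univ.erase a) ×ˢ C)
  have hT : #T = #A + (Fintype.card α - 1) * #C := by
    rw [card_union_of_disjoint (disjoint_product.2 (Or.inl (by simp))), card_product,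
      card_product, card_singleton, card_erase_of_mem (mem_univ a), card_univ, one_mul]
  calc #A + (Fintype.card α - 1) * #C = #(T.image (Function.uncurry Fin.cons)) := by
        rw [card_image_of_injective _ Fin.cons_injective2.uncurry, hT]
    _ ≤ #S := card_le_card fun w hw => by
        simp only [T, mem_image, mem_union, mem_product, mem_singleton, mem_erase] at hw
        obtain ⟨⟨b, z⟩, ⟨rfl, hz⟩ | ⟨⟨hb, -⟩, hz⟩, rfl⟩ := hw
        exacts [hA z hz, hC b hb z hz]

theorem card_ball_add_mul_le_card_ball_cons (a : α) (x : Fin n → α) :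
    #(ball p x m) + (Fintype.card α - 1) * #(ball p (Fin.cons a x) m) ≤
      #(ball p (Fin.cons a x : Fin (n + 1) → α) (m + 1)) :=
  card_add_mul_le_of_cons_mem a
    (fun z hz => mem_ball.2 (by simpa using (mem_ball.1 hz).cons a a))
    (fun b _ z hz => mem_ball.2 ((mem_ball.1 hz).skip b))

theorem card_ball_add_mul_le_card_ball_succ_cons (a : α) (x : Fin n → α) :
    #(ball (p + 1) x m) + (Fintype.card α - 1) * #(ball p x m) ≤
      #(ball (p + 1) (Fin.cons a x : Fin (n + 1) → α) (m + 1)) :=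
  card_add_mul_le_of_cons_mem a
    (fun z hz => mem_ball.2 (by simpa using (mem_ball.1 hz).cons a a))
    (fun b hb z hz => mem_ball.2 (by simpa [hb.symm] using (mem_ball.1 hz).cons a b))

theorem card_ball_comp_rev (x : Fin n → α) : #(ball p (x ∘ Fin.rev) m) = #(ball p x m) :=
  card_nbij' (· ∘ Fin.rev) (· ∘ Fin.rev)
    (fun z hz => mem_ball.2 <| by
      simpa [Function.comp_assoc, Fin.rev_involutive.comp_self] using (mem_ball.1 hz).rev)
    (fun z hz => mem_ball.2 (mem_ball.1 hz).rev)
    (fun z _ => by ext; simp) (fun z _ => by ext; simp)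

theorem card_ball_fin_zero (x : Fin 0 → α) : #(ball p x m) = Fintype.card α ^ m := by
  rw [eq_univ_of_forall fun _ =>
      mem_ball.2 ⟨Fin.elim0, fun i => i.elim0, by simp [hammingDist]⟩,
    card_univ, Fintype.card_fun, Fintype.card_fin]

theorem hammingBallVol_le_card_ball [Nonempty α] (p : ℕ) (x : Fin n → α) (u : ℕ)
    (hm : n + u = m) : hammingBallVol (Fintype.card α) m (u + p) ≤ #(ball p x m) := by
  induction m generalizing n u p with
  | zero =>
    obtain rfl : n = 0 := by omega
    exact (hammingBallVol_of_le Fintype.card_pos (by omega)).trans_le (card_ball_fin_zero x).ge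
  | succ m ih =>
    rcases n with _ | n
    · exact (hammingBallVol_of_le Fintype.card_pos (by omega)).trans_le (card_ball_fin_zero x).ge
    obtain ⟨a, x, rfl⟩ : ∃ a x', x = Fin.cons a x' :=
      ⟨x 0, Fin.tail x, (Fin.cons_self_tail x).symm⟩
    rcases u with _ | u
    · rcases p with _ | p
      · calc hammingBallVol _ (m + 1) (0 + 0) = hammingBallVol _ m (0 + 0) := by
              simp [hammingBallVol_zero_right]
          _ ≤ #(ball 0 x m) := ih 0 x 0 (by omega)
          _ ≤ _ := le_of_add_le_left (card_ball_add_mul_le_card_ball_cons a x)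
      · calc hammingBallVol _ (m + 1) (0 + (p + 1))
            = hammingBallVol _ m (0 + (p + 1)) +
                (Fintype.card α - 1) * hammingBallVol _ m (0 + p) := by
              simp only [zero_add, hammingBallVol_succ_succ]
          _ ≤ #(ball (p + 1) x m) + (Fintype.card α - 1) * #(ball p x m) :=
            add_le_add (ih _ x 0 (by omega)) (Nat.mul_le_mul_left _ (ih p x 0 (by omega)))
          _ ≤ _ := card_ball_add_mul_le_card_ball_succ_cons a x
    · calc hammingBallVol _ (m + 1) (u + 1 + p)
          = hammingBallVol _ m (u + 1 + p) +
              (Fintype.card α - 1) * hammingBallVol _ m (u + p) := by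
            rw [add_right_comm, hammingBallVol_succ_succ]
        _ ≤ #(ball p x m) + (Fintype.card α - 1) * #(ball p (Fin.cons a x) m) :=
          add_le_add (ih p x (u + 1) (by omega))
            (Nat.mul_le_mul_left _ (ih p (Fin.cons a x) u (by omega)))
        _ ≤ _ := card_ball_add_mul_le_card_ball_cons a x

theorem hammingBallVol_lt_card_ball_of_castSucc_ne_succ (x : Fin (n + 1) → α) (k : Fin n)
    (hk : x k.castSucc ≠ x k.succ) (hnm : n < m) :
    hammingBallVol (Fintype.card α) (m + 1) m < #(ball n x (m + 1)) := by
  let c : Fin (m + 1) → α := fun s => x ⟨min s n, by omega⟩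
  let D := Fintype.piFinset fun s => univ.erase (c s)
  have hmatch : univ \ D ⊆ ball n x (m + 1) := by
    intro z hz
    obtain ⟨s, hs⟩ : ∃ s, z s = c s := by simpa [D] using hz
    have := s.isLt
    exact mem_ball.2 (embedsWithin_of_apply_eq (i := ⟨min s n, by omega⟩) (s := s)
      (min_le_left _ _) (by simp only; omega) hs.symm)
  let z₀ : Fin (m + 1) → α := fun s => if c s = x k.castSucc then x k.succ else x k.castSucc
  have hz₀D : z₀ ∈ D := by
    simp only [D, Fintype.mem_piFinset, mem_erase, mem_univ, and_true]
    intro s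
    dsimp only [z₀]
    split_ifs with h
    · rw [h]; exact hk.symm
    · exact Ne.symm h
  have hz₀ : z₀ ∈ ball n x (m + 1) := by
    have hc : c ⟨k + 1, by omega⟩ = x k.succ := congrArg x (Fin.ext (by simp))
    refine mem_ball.2 (embedsWithin_of_apply_eq (i := k.castSucc) (s := ⟨k + 1, by omega⟩)
      (by simp) (by simp; omega) ?_)
    simp [z₀, hc, hk.symm]
  have hD : #D = (Fintype.card α - 1) ^ (m + 1) := by
    simp [D, Fintype.card_piFinset, card_erase_of_mem]
  calc hammingBallVol (Fintype.card α) (m + 1) m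
      = Fintype.card α ^ (m + 1) - (Fintype.card α - 1) ^ (m + 1) := by
        have := hammingBallVol_add_pow (Fintype.card_pos_iff.2 ⟨x 0⟩) m
        omega
    _ = #(univ \ D) := by rw [card_univ_sdiff, hD, Fintype.card_fun, Fintype.card_fin]
    _ < #(insert z₀ (univ \ D)) := by
        rw [card_insert_of_notMem (by simp [hz₀D])]
        exact Nat.lt_succ_self _
    _ ≤ #(ball n x (m + 1)) := card_le_card (insert_subset hz₀ hmatch)

theorem hammingBallVol_lt_card_ball_cons (a : α) {x : Fin n → α} {u : ℕ} (hu : 1 ≤ u)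
    (hm : n + u = m) (h : hammingBallVol (Fintype.card α) m (u + p) < #(ball p x m)) :
    hammingBallVol (Fintype.card α) (m + 1) (u + p) < #(ball p (Fin.cons a x) (m + 1)) := by
  have : Nonempty α := ⟨a⟩
  obtain ⟨u, rfl⟩ : ∃ u', u = u' + 1 := ⟨u - 1, by omega⟩
  calc hammingBallVol _ (m + 1) (u + 1 + p)
      = hammingBallVol _ m (u + 1 + p) +
          (Fintype.card α - 1) * hammingBallVol _ m (u + p) := by
        rw [add_right_comm, hammingBallVol_succ_succ]
    _ < #(ball p x m) + (Fintype.card α - 1) * #(ball p (Fin.cons a x) m) :=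
      add_lt_add_of_lt_of_le h
        (Nat.mul_le_mul_left _ (hammingBallVol_le_card_ball p (Fin.cons a x) u (by omega)))
    _ ≤ _ := card_ball_add_mul_le_card_ball_cons a x

theorem hammingBallVol_lt_card_ball {x : Fin n → α} (hx : ∃ i j, x i ≠ x j) (hp : 1 ≤ p)
    (hpn : p < n) {u : ℕ} (hu : 1 ≤ u) (hm : n + u = m) :
    hammingBallVol (Fintype.card α) m (u + p) < #(ball p x m) := by
  induction n generalizing m with
  | zero => omega
  | succ n ih =>
    obtain ⟨m, rfl⟩ : ∃ m', m = m' + 1 := ⟨m - 1, by omega⟩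
    rcases Nat.lt_succ_iff_lt_or_eq.1 hpn with hpn | rfl
    · have hcons : ∀ y : Fin (n + 1) → α, (∃ i j, Fin.tail y i ≠ Fin.tail y j) →
          hammingBallVol (Fintype.card α) (m + 1) (u + p) < #(ball p y (m + 1)) := fun y hy => by
        simpa using hammingBallVol_lt_card_ball_cons (y 0) hu (by omega) (ih hy hpn (by omega))
      rcases Fin.tail_nonconstant_or_tail_rev_nonconstant (by omega) hx with h | h
      · exact hcons x h
      · exact card_ball_comp_rev x ▸ hcons _ h
    · obtain ⟨k, hk⟩ := Fin.exists_castSucc_ne_succ_s14 hx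
      rw [show u + p = m by omega]
      exact hammingBallVol_lt_card_ball_of_castSucc_ne_succ x k hk (by omega)

end InsertionBall

open InsertionBall in
theorem idsBall_ins_sub_strict_general (n q t p : ℕ) (ht : 1 ≤ t) (hp : 1 ≤ p)
    (hpn : p < n) (x : Fin n → Fin q) (hx : ∃ i j, x i ≠ x j) :
    (idsBall q 0 p x : Set (Fin (n + t) → Fin q)).ncard >
      ∑ i ∈ Finset.range (t + p + 1), (n + t).choose i * (q - 1) ^ i := by
  calc ∑ i ∈ Finset.range (t + p + 1), (n + t).choose i * (q - 1) ^ i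
      = hammingBallVol (Fintype.card (Fin q)) (n + t) (t + p) := by rw [Fintype.card_fin]; rfl
    _ < #(ball p x (n + t)) := hammingBallVol_lt_card_ball hx hp hpn ht rfl
    _ = (↑(ball p x (n + t)) : Set (Fin (n + t) → Fin q)).ncard := (Set.ncard_coe_finset _).symm
    _ ≤ _ := Set.ncard_le_ncard (ball_subset_idsBall p x _)

/-- strict inequality for `B_{t,0,p}(x)` when `x` has
more than one run. -/
theorem idsBall_ins_sub_strict (n q t p : ℕ) (hq : 1 ≤ q) (ht : 1 ≤ t) (hp : 1 ≤ p)
    (hpn : p < n) (x : Fin n → Fin q) (hx : ∃ i j, x i ≠ x j) :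
    (idsBall q 0 p x : Set (Fin (n + t) → Fin q)).ncard >
      ∑ i ∈ Finset.range (t + p + 1), (n + t).choose i * (q - 1) ^ i :=
  idsBall_ins_sub_strict_general n q t p ht hp hpn x hx
end

section
/- For all non-negative integers n, q, t, s, p with n ≥ s, q ≥ 1, and t ≥ s, the containment B_{t-s,0,s+p}(x) ⊆ B_{t,s,p}(x) holds for every x ∈ A_q^n; consequently |B_{t,s,p}(x)| ≥ |B_{t-s,0,s+p}(x)|. -/
/-!
A word `z` in `B_{t-s,0,s+p}(x)` contains a copy of `x` with at most `s + p` mismatches.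
Deleting `s` positions of that copy, chosen to cover as many mismatches as possible, leaves
subsequences of `x` and `z` of length `n - s` with at most `p` mismatches.
-/

open Finset

lemma Finset.exists_card_eq_card_sdiff_le {α : Type*} [Fintype α] [DecidableEq α]
    {M : Finset α} {s p : ℕ} (hM : #M ≤ s + p) (hs : s ≤ Fintype.card α) :
    ∃ D : Finset α, #D = s ∧ #(M \ D) ≤ p := by
  obtain ⟨A, hAM, hA⟩ := M.exists_subset_card_eq (min_le_right s #M)
  obtain ⟨D, hAD, hD⟩ := A.exists_superset_card_eq (hA ▸ min_le_left s #M) hs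
  refine ⟨D, hD, ?_⟩
  calc #(M \ D) ≤ #(M \ A) := card_le_card (sdiff_subset_sdiff le_rfl hAD)
    _ = #M - min s #M := by rw [card_sdiff_of_subset hAM, hA]
    _ ≤ p := by omega

lemma hammingDist_subseqOf {q k m : ℕ} (u v : Fin k → Fin q) (K : Finset (Fin k))
    (h : #K = m) :
    hammingDist (subseqOf u K h) (subseqOf v K h) = #{i ∈ K | u i ≠ v i} := by
  conv_rhs => rw [← K.map_orderEmbOfFin_univ h, filter_map, card_map]
  rfl

lemma subseqOf_map_orderEmbOfFin {q n k m : ℕ} (x : Fin n → Fin q) (S : Finset (Fin n))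
    (hS : #S = k) (K : Finset (Fin k)) (hK : #K = m)
    (hSK : #(K.map (S.orderEmbOfFin hS).toEmbedding) = m) :
    subseqOf x (K.map (S.orderEmbOfFin hS).toEmbedding) hSK = subseqOf (subseqOf x S hS) K hK := by
  have hmap := orderEmbOfFin_unique hSK (f := fun i => S.orderEmbOfFin hS (K.orderEmbOfFin hK i))
    (fun i => mem_map_of_mem _ (K.orderEmbOfFin_mem hK i))
    ((S.orderEmbOfFin hS).strictMono.comp (K.orderEmbOfFin hK).strictMono)
  funext i
  simp only [subseqOf, coe_orderIsoOfFin_apply, ← hmap]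

lemma exists_subseqOf_hammingDist_le {q k s p : ℕ} {u v : Fin k → Fin q}
    (huv : hammingDist u v ≤ s + p) (hs : s ≤ k) :
    ∃ (K : Finset (Fin k)) (hK : #K = k - s),
      hammingDist (subseqOf u K hK) (subseqOf v K hK) ≤ p := by
  obtain ⟨D, hD, hMD⟩ := exists_card_eq_card_sdiff_le (M := {i | u i ≠ v i}) huv
    (by rwa [Fintype.card_fin])
  have hK : #Dᶜ = k - s := by rw [card_compl, Fintype.card_fin, hD]
  refine ⟨Dᶜ, hK, ?_⟩
  rw [hammingDist_subseqOf]
  refine le_trans (card_le_card fun i => ?_) hMD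
  simp only [mem_filter, mem_compl, mem_sdiff, mem_univ, true_and]
  exact And.symm

lemma idsBall_zero_add_subset {q n m s p : ℕ} (x : Fin n → Fin q) (hsn : s ≤ n) :
    (idsBall q 0 (s + p) x : Set (Fin m → Fin q)) ⊆ idsBall q s p x := by
  rintro z ⟨S1, S2, h1, h2, hd⟩
  obtain ⟨K, hK, hKd⟩ := exists_subseqOf_hammingDist_le hd hsn
  refine ⟨K.map (S1.orderEmbOfFin h1).toEmbedding, K.map (S2.orderEmbOfFin h2).toEmbedding,
    (card_map _).trans hK, (card_map _).trans hK, ?_⟩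
  rwa [subseqOf_map_orderEmbOfFin x S1 h1 K hK, subseqOf_map_orderEmbOfFin z S2 h2 K hK]

theorem idsBall_subset_of_s_le_t_general (n q t s p : ℕ) (hsn : s ≤ n)
    (x : Fin n → Fin q) :
    (idsBall q 0 (s + p) x : Set (Fin (n + t - s) → Fin q)) ⊆
        idsBall q s p x ∧
      (idsBall q s p x : Set (Fin (n + t - s) → Fin q)).ncard ≥
        (idsBall q 0 (s + p) x : Set (Fin (n + t - s) → Fin q)).ncard := by
  have hsub : (idsBall q 0 (s + p) x : Set (Fin (n + t - s) → Fin q)) ⊆ idsBall q s p x :=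
    idsBall_zero_add_subset x hsn
  exact ⟨hsub, Set.ncard_le_ncard hsub (Set.toFinite _)⟩

/-- for `t ≥ s`, `B_{t-s,0,s+p}(x) ⊆ B_{t,s,p}(x)`, hence the
corresponding inequality of sizes. -/
theorem idsBall_subset_of_s_le_t (n q t s p : ℕ) (hsn : s ≤ n) (hq : 1 ≤ q)
    (hst : s ≤ t) (x : Fin n → Fin q) :
    (idsBall q 0 (s + p) x : Set (Fin (n + t - s) → Fin q)) ⊆
        idsBall q s p x ∧
      (idsBall q s p x : Set (Fin (n + t - s) → Fin q)).ncard ≥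
        (idsBall q 0 (s + p) x : Set (Fin (n + t - s) → Fin q)).ncard :=
  idsBall_subset_of_s_le_t_general n q t s p hsn x
end
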